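/- arXiv:2404.07141 — 3 statements merged into one kernel-verified Lean document; each statement's English description precedes it below -/
import Mathlib

section
/- If X_{k+1} is independent of (X_1,…,X_k), i.e., the joint copula measure factorizes as μ_{C̃} = μ_C × μ_{C_{k+1}}, then T_{d_1,…,d_{k+1}}(μ_{C̃}; ν_1,…,ν_{k+1}) = T_{d_1,…,d_k}(μ_C; ν_1,…,ν_k); the Wasserstein dependence is unchanged by adding an independent component. -/
open MeasureTheory
open scoped ENNReal unitInterval

/-- The optimal-transport cost between two measures `μ, ν` on `X` for the cost
function `c` : the infimum, over all couplings `γ` of `μ` and `ν`, of `∫ c dγ`.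
For `c u v = ‖u - v‖²` this is the squared 2-Wasserstein distance `W₂²(μ, ν)`. -/
noncomputable def Wsq {X : Type*} [MeasurableSpace X] (c : X → X → ℝ)
    (μ ν : Measure X) : ℝ≥0∞ :=
  ⨅ (γ : Measure (X × X)) (_ : γ.map Prod.fst = μ ∧ γ.map Prod.snd = ν),
    ∫⁻ p, ENNReal.ofReal (c p.1 p.2) ∂γ

/-- The `i`-th block `[0,1]^{d i}` of the cube `[0,1]^q`, `q = d 0 + ⋯ + d (k-1)`. -/
abbrev Blk {k : ℕ} (d : Fin k → ℕ) (i : Fin k) : Type := Fin (d i) → I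

/-- The cube `[0,1]^q` decomposed in `k` blocks of dimensions `d i`. -/
abbrev Cube {k : ℕ} (d : Fin k → ℕ) : Type := ∀ i, Blk d i

/-- Squared Euclidean cost `‖a - b‖²` on the block `[0,1]^{d i}`. -/
noncomputable def blockCost {k : ℕ} (d : Fin k → ℕ) (i : Fin k) (a b : Blk d i) : ℝ :=
  ∑ j, dist (a j) (b j) ^ 2

/-- Squared Euclidean cost `‖u - v‖²` on the cube `[0,1]^q`. -/
noncomputable def jointCost {k : ℕ} (d : Fin k → ℕ) (u v : Cube d) : ℝ :=
  ∑ i, ∑ j, dist (u i j) (v i j) ^ 2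

/-- The marginal of a measure on the cube on the `i`-th coordinate block. -/
noncomputable def marg {k : ℕ} (d : Fin k → ℕ) (μ : Measure (Cube d)) (i : Fin k) :
    Measure (Blk d i) :=
  μ.map (fun u => u i)

/-- `T_{d₁,…,d_k}(π; ν₁,…,ν_k) = W₂²(π, ν₁ × ⋯ × ν_k) − ∑ i W₂²(π_i, ν_i)`. -/
noncomputable def Tdep {k : ℕ} (d : Fin k → ℕ) (ν : ∀ i, Measure (Blk d i))
    (π : Measure (Cube d)) : ℝ :=
  (Wsq (jointCost d) π (Measure.pi ν)).toReal -
    ∑ i, (Wsq (blockCost d i) (marg d π i) (ν i)).toReal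

/-- The marginal of a measure on a `(k+1)`-block cube on the first `k` blocks. -/
noncomputable def firstMarg {k : ℕ} (d : Fin (k + 1) → ℕ) (μ : Measure (Cube d)) :
    Measure (Cube (fun i : Fin k => d i.castSucc)) :=
  μ.map (fun u => fun i : Fin k => u i.castSucc)

/-! Optimal transport for a cost that is a sum of block costs is additive over independent
blocks: a product of couplings couples the product measures, and conversely every coupling of
two measures on `X × Y` projects to couplings of their `X`- and `Y`-marginals. Splitting the
cube into its first `k` blocks and its last block, independence makes `μ_C̃` the product of its
two marginals, and `ν₁ × ⋯ × ν_{k+1}` is such a product anyway, so `W₂²(μ_C̃, ν₁ × ⋯ × ν_{k+1})`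
gains exactly `W₂²(μ_{C_{k+1}}, ν_{k+1})`, which is the new marginal term of `T`. -/

section Coupling

variable {X Y : Type*} [MeasurableSpace X] [MeasurableSpace Y]

def IsCoupling (γ : Measure (X × X)) (μ ν : Measure X) : Prop :=
  γ.map Prod.fst = μ ∧ γ.map Prod.snd = ν

lemma Wsq_le_lintegral (c : X → X → ℝ) {μ ν : Measure X} {γ : Measure (X × X)}
    (hγ : IsCoupling γ μ ν) : Wsq c μ ν ≤ ∫⁻ p, ENNReal.ofReal (c p.1 p.2) ∂γ :=
  iInf₂_le γ hγ

lemma IsCoupling.isProbabilityMeasure {γ : Measure (X × X)} {μ ν : Measure X}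
    [IsProbabilityMeasure μ] (hγ : IsCoupling γ μ ν) : IsProbabilityMeasure γ :=
  have : IsProbabilityMeasure (γ.map Prod.fst) := hγ.1 ▸ ‹_›
  Measure.isProbabilityMeasure_of_map Prod.fst

lemma IsCoupling.map_prodMap {γ : Measure (X × X)} {μ ν : Measure X} (hγ : IsCoupling γ μ ν)
    {f : X → Y} (hf : Measurable f) : IsCoupling (γ.map (Prod.map f f)) (μ.map f) (ν.map f) := by
  constructor
  · rw [Measure.map_map measurable_fst (hf.prodMap hf), ← hγ.1, Measure.map_map hf measurable_fst]
    rfl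
  · rw [Measure.map_map measurable_snd (hf.prodMap hf), ← hγ.2, Measure.map_map hf measurable_snd]
    rfl

lemma IsCoupling.prod {γX : Measure (X × X)} {γY : Measure (Y × Y)} {μX νX : Measure X}
    {μY νY : Measure Y} [IsProbabilityMeasure μX] [IsProbabilityMeasure μY]
    (hX : IsCoupling γX μX νX) (hY : IsCoupling γY μY νY) :
    IsCoupling ((γX.prod γY).map fun q => ((q.1.1, q.2.1), (q.1.2, q.2.2)))
      (μX.prod μY) (νX.prod νY) := by
  have := hX.isProbabilityMeasure
  have := hY.isProbabilityMeasure
  constructor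
  · rw [Measure.map_map measurable_fst (by fun_prop), ← hX.1, ← hY.1,
      Measure.map_prod_map _ _ measurable_fst measurable_fst]
    rfl
  · rw [Measure.map_map measurable_snd (by fun_prop), ← hX.2, ← hY.2,
      Measure.map_prod_map _ _ measurable_snd measurable_snd]
    rfl

lemma Wsq_ne_top_of_le (c : X → X → ℝ) {C : ℝ} (hc : ∀ a b, c a b ≤ C) (μ ν : Measure X)
    [IsProbabilityMeasure μ] [IsProbabilityMeasure ν] : Wsq c μ ν ≠ ⊤ := by
  refine ne_top_of_le_ne_top (ENNReal.ofReal_ne_top (r := C))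
    ((Wsq_le_lintegral c (γ := μ.prod ν) ⟨by simp, by simp⟩).trans ?_)
  calc ∫⁻ p, ENNReal.ofReal (c p.1 p.2) ∂(μ.prod ν)
      ≤ ∫⁻ _, ENNReal.ofReal C ∂(μ.prod ν) :=
        lintegral_mono fun p => ENNReal.ofReal_le_ofReal (hc _ _)
    _ = ENNReal.ofReal C := by simp

lemma Wsq_map_le (e : X ≃ᵐ Y) (c : Y → Y → ℝ) (μ ν : Measure X) :
    Wsq c (μ.map e) (ν.map e) ≤ Wsq (fun x x' => c (e x) (e x')) μ ν :=
  le_iInf₂ fun _ hγ => (Wsq_le_lintegral c (IsCoupling.map_prodMap hγ e.measurable)).trans_eq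
    (lintegral_map_equiv _ (e.prodCongr e))

lemma Wsq_map_measurableEquiv (e : X ≃ᵐ Y) (c : Y → Y → ℝ) (μ ν : Measure X) :
    Wsq c (μ.map e) (ν.map e) = Wsq (fun x x' => c (e x) (e x')) μ ν := by
  refine le_antisymm (Wsq_map_le e c μ ν) ?_
  simpa only [MeasurableEquiv.map_symm_map, MeasurableEquiv.apply_symm_apply] using
    Wsq_map_le e.symm (fun x x' => c (e x) (e x')) (μ.map e) (ν.map e)

end Coupling

section Product

variable {X Y : Type*} [MeasurableSpace X] [MeasurableSpace Y]

lemma lintegral_fst_add_snd_prod (γX : Measure X) (γY : Measure Y)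
    [IsProbabilityMeasure γX] [IsProbabilityMeasure γY] {f : X → ℝ≥0∞} {g : Y → ℝ≥0∞}
    (hf : Measurable f) (hg : Measurable g) :
    ∫⁻ q, f q.1 + g q.2 ∂(γX.prod γY) = ∫⁻ x, f x ∂γX + ∫⁻ y, g y ∂γY := by
  rw [lintegral_add_left (f := fun q : X × Y => f q.1) (hf.comp measurable_fst),
    ← lintegral_map hf measurable_fst, ← lintegral_map hg measurable_snd]
  simp

def prodCost (cX : X → X → ℝ) (cY : Y → Y → ℝ) (p q : X × Y) : ℝ :=
  cX p.1 q.1 + cY p.2 q.2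

variable {cX : X → X → ℝ} {cY : Y → Y → ℝ}

lemma measurable_prodCost (hcX : Measurable (Function.uncurry cX))
    (hcY : Measurable (Function.uncurry cY)) : Measurable (Function.uncurry (prodCost cX cY)) :=
  (hcX.comp (measurable_fst.fst.prodMk measurable_snd.fst)).add
    (hcY.comp (measurable_fst.snd.prodMk measurable_snd.snd))

lemma add_Wsq_map_fst_map_snd_le (hcX : Measurable (Function.uncurry cX))
    (hcY : Measurable (Function.uncurry cY)) (hcX0 : ∀ a b, 0 ≤ cX a b)
    (hcY0 : ∀ a b, 0 ≤ cY a b) (μ ν : Measure (X × Y)) :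
    Wsq cX (μ.map Prod.fst) (ν.map Prod.fst) + Wsq cY (μ.map Prod.snd) (ν.map Prod.snd) ≤
      Wsq (prodCost cX cY) μ ν := by
  refine le_iInf₂ fun γ hγ => ?_
  calc _ ≤ ∫⁻ p, ENNReal.ofReal (cX p.1 p.2) ∂(γ.map (Prod.map Prod.fst Prod.fst)) +
        ∫⁻ p, ENNReal.ofReal (cY p.1 p.2) ∂(γ.map (Prod.map Prod.snd Prod.snd)) :=
      add_le_add (Wsq_le_lintegral cX (IsCoupling.map_prodMap hγ measurable_fst))
        (Wsq_le_lintegral cY (IsCoupling.map_prodMap hγ measurable_snd))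
    _ = ∫⁻ p, ENNReal.ofReal (prodCost cX cY p.1 p.2) ∂γ := by
      rw [lintegral_map (f := fun p : X × X => ENNReal.ofReal (cX p.1 p.2)) hcX.ennreal_ofReal
          (by fun_prop),
        lintegral_map (f := fun p : Y × Y => ENNReal.ofReal (cY p.1 p.2)) hcY.ennreal_ofReal
          (by fun_prop),
        ← lintegral_add_left]
      · congr with p
        exact (ENNReal.ofReal_add (hcX0 _ _) (hcY0 _ _)).symm
      · exact hcX.ennreal_ofReal.comp (measurable_fst.prodMap measurable_fst)

lemma Wsq_prod_le_add (hcX : Measurable (Function.uncurry cX))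
    (hcY : Measurable (Function.uncurry cY)) (hcX0 : ∀ a b, 0 ≤ cX a b)
    (hcY0 : ∀ a b, 0 ≤ cY a b) (μX νX : Measure X) (μY νY : Measure Y)
    [IsProbabilityMeasure μX] [IsProbabilityMeasure μY] :
    Wsq (prodCost cX cY) (μX.prod μY) (νX.prod νY) ≤ Wsq cX μX νX + Wsq cY μY νY := by
  refine ENNReal.le_iInf_add_iInf fun γX γY => ENNReal.le_iInf_add_iInf fun hX hY => ?_
  change IsCoupling γX μX νX at hX
  change IsCoupling γY μY νY at hY
  have := hX.isProbabilityMeasure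
  have := hY.isProbabilityMeasure
  refine (Wsq_le_lintegral _ (hX.prod hY)).trans_eq ?_
  rw [lintegral_map (by exact (measurable_prodCost hcX hcY).ennreal_ofReal) (by fun_prop)]
  simp only [prodCost, ENNReal.ofReal_add (hcX0 _ _) (hcY0 _ _)]
  exact lintegral_fst_add_snd_prod γX γY hcX.ennreal_ofReal hcY.ennreal_ofReal

lemma Wsq_prod_prod (hcX : Measurable (Function.uncurry cX))
    (hcY : Measurable (Function.uncurry cY)) (hcX0 : ∀ a b, 0 ≤ cX a b)
    (hcY0 : ∀ a b, 0 ≤ cY a b) (μX νX : Measure X) (μY νY : Measure Y)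
    [IsProbabilityMeasure μX] [IsProbabilityMeasure μY] [IsProbabilityMeasure νX]
    [IsProbabilityMeasure νY] :
    Wsq (prodCost cX cY) (μX.prod μY) (νX.prod νY) = Wsq cX μX νX + Wsq cY μY νY :=
  le_antisymm (Wsq_prod_le_add hcX hcY hcX0 hcY0 μX νX μY νY) <| by
    simpa using add_Wsq_map_fst_map_snd_le hcX hcY hcX0 hcY0 (μX.prod μY) (νX.prod νY)

end Product

namespace MeasurableEquiv

def piFinInitLast {n : ℕ} (α : Fin (n + 1) → Type*) [∀ i, MeasurableSpace (α i)] :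
    (∀ i, α i) ≃ᵐ (∀ i : Fin n, α i.castSucc) × α (Fin.last n) where
  toFun u := (Fin.init u, u (Fin.last n))
  invFun p := Fin.snoc p.1 p.2
  left_inv := Fin.snoc_init_self
  right_inv p := by simp
  measurable_toFun :=
    (measurable_pi_lambda _ fun _ => measurable_pi_apply _).prodMk (measurable_pi_apply _)
  measurable_invFun := by
    change Measurable fun p : (∀ i : Fin n, α i.castSucc) × α (Fin.last n) =>
      (Fin.snoc p.1 p.2 : ∀ i, α i)
    refine measurable_pi_lambda _ fun i => ?_
    induction i using Fin.lastCases with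
    | last => simpa only [Fin.snoc_last] using measurable_snd
    | cast j => simpa only [Fin.snoc_castSucc] using measurable_fst.eval

lemma piFinInitLast_symm_apply {n : ℕ} {α : Fin (n + 1) → Type*} [∀ i, MeasurableSpace (α i)]
    (p : (∀ i : Fin n, α i.castSucc) × α (Fin.last n)) :
    (piFinInitLast α).symm p = Fin.snoc p.1 p.2 :=
  rfl

end MeasurableEquiv

open MeasurableEquiv in
theorem measurePreserving_piFinInitLast {n : ℕ} {α : Fin (n + 1) → Type*}
    [∀ i, MeasurableSpace (α i)] (μ : ∀ i, Measure (α i)) [∀ i, SigmaFinite (μ i)] :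
    MeasurePreserving (piFinInitLast α) (Measure.pi μ)
      ((Measure.pi fun i => μ i.castSucc).prod (μ (Fin.last n))) := by
  refine MeasurePreserving.symm (piFinInitLast α).symm
    ⟨(piFinInitLast α).symm.measurable, (Measure.pi_eq fun s _ => ?_).symm⟩
  rw [MeasurableEquiv.map_apply, Fin.prod_univ_castSucc, ← Measure.pi_pi, ← Measure.prod_prod]
  congr 1 with p
  simp [piFinInitLast_symm_apply, Fin.forall_fin_succ']

section Cube

variable {k : ℕ}

lemma blockCost_nonneg (d : Fin k → ℕ) (i : Fin k) (a b : Blk d i) : 0 ≤ blockCost d i a b :=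
  Finset.sum_nonneg fun _ _ => sq_nonneg _

lemma jointCost_nonneg (d : Fin k → ℕ) (u v : Cube d) : 0 ≤ jointCost d u v :=
  Finset.sum_nonneg fun i _ => blockCost_nonneg d i (u i) (v i)

lemma blockCost_le (d : Fin k → ℕ) (i : Fin k) (a b : Blk d i) : blockCost d i a b ≤ d i := by
  calc blockCost d i a b ≤ ∑ _j : Fin (d i), (1 : ℝ) :=
        Finset.sum_le_sum fun j _ =>
          pow_le_one₀ dist_nonneg (Real.dist_le_of_mem_Icc_01 (a j).2 (b j).2)
    _ = d i := by simp

lemma jointCost_le (d : Fin k → ℕ) (u v : Cube d) : jointCost d u v ≤ ∑ i, (d i : ℝ) :=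
  Finset.sum_le_sum fun i _ => blockCost_le d i (u i) (v i)

lemma measurable_blockCost (d : Fin k → ℕ) (i : Fin k) :
    Measurable (Function.uncurry (blockCost d i)) := by
  unfold blockCost
  fun_prop

lemma measurable_jointCost (d : Fin k → ℕ) : Measurable (Function.uncurry (jointCost d)) := by
  unfold jointCost
  fun_prop

instance (d : Fin k → ℕ) (μ : Measure (Cube d)) [IsProbabilityMeasure μ] (i : Fin k) :
    IsProbabilityMeasure (marg d μ i) :=
  Measure.isProbabilityMeasure_map (measurable_pi_apply i).aemeasurable

end Cube

section Split

variable {k : ℕ} (d : Fin (k + 1) → ℕ)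

instance (μ : Measure (Cube d)) [IsProbabilityMeasure μ] :
    IsProbabilityMeasure (firstMarg d μ) :=
  Measure.isProbabilityMeasure_map
    (measurable_pi_lambda _ fun _ => measurable_pi_apply _).aemeasurable

lemma marg_firstMarg (μ : Measure (Cube d)) (i : Fin k) :
    marg (fun i : Fin k => d i.castSucc) (firstMarg d μ) i = marg d μ i.castSucc := by
  rw [marg, firstMarg, Measure.map_map (by fun_prop) (by fun_prop)]
  rfl

lemma jointCost_comp_piFinInitLast_symm :
    (fun p q => jointCost d ((MeasurableEquiv.piFinInitLast _).symm p)
      ((MeasurableEquiv.piFinInitLast _).symm q)) =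
      prodCost (jointCost fun i : Fin k => d i.castSucc) (blockCost d (Fin.last k)) := by
  ext p q
  simp [MeasurableEquiv.piFinInitLast_symm_apply, jointCost, blockCost, prodCost,
    Fin.sum_univ_castSucc]

lemma Wsq_jointCost_snoc_prod (P : Measure (Cube fun i : Fin k => d i.castSucc))
    (L : Measure (Blk d (Fin.last k))) [IsProbabilityMeasure P] [IsProbabilityMeasure L]
    (ν : ∀ i, Measure (Blk d i)) [∀ i, IsProbabilityMeasure (ν i)] :
    Wsq (jointCost d) ((P.prod L).map (MeasurableEquiv.piFinInitLast _).symm) (Measure.pi ν) =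
      Wsq (jointCost fun i : Fin k => d i.castSucc) P (Measure.pi fun i => ν i.castSucc) +
        Wsq (blockCost d (Fin.last k)) L (ν (Fin.last k)) := by
  rw [← (measurePreserving_piFinInitLast ν).symm.map_eq, Wsq_map_measurableEquiv,
    jointCost_comp_piFinInitLast_symm, Wsq_prod_prod (measurable_jointCost _)
      (measurable_blockCost _ _) (jointCost_nonneg _) (blockCost_nonneg _ _)]

end Split

/-- If `X_{k+1}` is independent of `(X_1,…,X_k)`, i.e. the joint measure factorizes as
`μ_C̃ = μ_C × μ_{C_{k+1}}`, then `T_{d₁,…,d_{k+1}}(μ_C̃; ν₁,…,ν_{k+1}) =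
T_{d₁,…,d_k}(μ_C; ν₁,…,ν_k)` : the Wasserstein dependence is unchanged by adding an
independent component. -/
theorem Tdep_of_indep {k : ℕ} (d : Fin (k + 1) → ℕ)
    (μt : Measure (Cube d)) [IsProbabilityMeasure μt]
    (ν : ∀ i, Measure (Blk d i)) [∀ i, IsProbabilityMeasure (ν i)]
    (hind : μt = ((firstMarg d μt).prod (μt.map (fun u => u (Fin.last k)))).map
      (fun p => Fin.snoc p.1 p.2)) :
    Tdep d ν μt =
      Tdep (fun i : Fin k => d i.castSucc) (fun i => ν i.castSucc) (firstMarg d μt) := by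
  have hW : Wsq (jointCost d) μt (Measure.pi ν) =
      Wsq (jointCost fun i : Fin k => d i.castSucc) (firstMarg d μt)
          (Measure.pi fun i => ν i.castSucc) +
        Wsq (blockCost d (Fin.last k)) (marg d μt (Fin.last k)) (ν (Fin.last k)) := by
    -- up to unfolding, `hind` says `μt = ((firstMarg d μt).prod (marg d μt (Fin.last k))).map
    -- (MeasurableEquiv.piFinInitLast _).symm`
    conv_lhs => rw [hind]
    exact Wsq_jointCost_snoc_prod d (firstMarg d μt) (marg d μt (Fin.last k)) ν
  rw [Tdep, Tdep, hW, ENNReal.toReal_add (Wsq_ne_top_of_le _ (jointCost_le _) _ _)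
    (Wsq_ne_top_of_le _ (blockCost_le _ _) _ _), Fin.sum_univ_castSucc]
  simp only [marg_firstMarg]
  exact add_sub_add_right_eq_sub _ _ _
end

section
/- Let d₁ ≤ ⋯ ≤ d_k and let R_ii ∈ S^{d_i}_≥ have eigendecomposition R_ii = U_ii Λ_ii U_ii^T with decreasing eigenvalues λ_{1,ii} ≥ ⋯ ≥ λ_{d_i,ii}. Define R_m ∈ ℝ^{q×q} (q = d₁+⋯+d_k) as the block matrix with diagonal blocks R_ii and off-diagonal blocks Ψ_ij = U_ii Λ_ii^{1/2} Π_ij Λ_jj^{1/2} U_jj^T, where Π_ij ∈ ℝ^{d_i × d_j} is the matrix (I_{d_i} 0). Then, setting λ_{j,ii} = 0 for j > d_i, the multiset of eigenvalues of R_m is {λ_{j,11} + λ_{j,22} + ⋯ + λ_{j,kk} : j = 1,…,q}. -/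
/-!
Write `q = d₁ + ⋯ + dₖ` and let `F` be the `q × q` matrix obtained by stacking the blocks
`Fᵢ = Uᵢ Λᵢ^{1/2} Π_{dᵢ,q}`. Since `Π_{dᵢ,q} Π_{dⱼ,q}ᵀ = Π_{dᵢ,dⱼ}`, the blocks of `F Fᵀ` are
exactly those of `R_m`, so `R_m = F Fᵀ`. On the other hand, orthogonality of the `Uᵢ` gives
`Fᵢᵀ Fᵢ = Π_{dᵢ,q}ᵀ Λᵢ Π_{dᵢ,q}`, the diagonal matrix carrying `λ_{j,ii}` in its first `dᵢ` slots,
so `Fᵀ F = ∑ᵢ Fᵢᵀ Fᵢ` is diagonal with entries `λ_{j,11} + ⋯ + λ_{j,kk}`. As `F Fᵀ` and `Fᵀ F`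
have the same characteristic polynomial, the eigenvalues of `R_m` are these sums.
-/

open Matrix

/-- The positive semidefinite square root `A^{1/2}` of a matrix
(junk value `0` if `A` is not positive semidefinite). -/
noncomputable def msqrt {n : Type*} [Fintype n] [DecidableEq n]
    (A : Matrix n n ℝ) : Matrix n n ℝ := by
  classical exact if h : A.PosSemidef then
    h.1.eigenvectorUnitary.1 * diagonal (((↑) : ℝ → ℝ) ∘ (√·) ∘ h.1.eigenvalues) *
      (star h.1.eigenvectorUnitary : Matrix n n ℝ) else 0

/-- The squared Bures-Wasserstein distance
`d_W²(R, S) = tr R + tr S − 2 tr((R^{1/2} S R^{1/2})^{1/2})`. -/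
noncomputable def dWsq {n : Type*} [Fintype n] [DecidableEq n]
    (R S : Matrix n n ℝ) : ℝ :=
  R.trace + S.trace - 2 * (msqrt (msqrt R * S * msqrt R)).trace

/-- The block matrix `R_m` with diagonal blocks `R_ii = U_ii Λ_ii U_iiᵀ` and off-diagonal
blocks `Ψ_ij = U_ii Λ_ii^{1/2} Π_ij Λ_jj^{1/2} U_jjᵀ`, where `Π_ij ∈ ℝ^{d_i × d_j}` is the
upper-left block `(I 0)` of the identity.  Entrywise:
`(R_m)_{(i,a),(j,b)} = ∑_{r,s : r = s} U_i[a,r] √(λ_{r,i}) √(λ_{s,j}) U_j[b,s]`. -/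
noncomputable def Rmax {k : ℕ} (d : Fin k → ℕ)
    (U : ∀ i, Matrix (Fin (d i)) (Fin (d i)) ℝ) (lam : ∀ i, Fin (d i) → ℝ) :
    Matrix (Σ i, Fin (d i)) (Σ i, Fin (d i)) ℝ :=
  fun p q => ∑ r : Fin (d p.1), ∑ s : Fin (d q.1),
    if (r : ℕ) = (s : ℕ) then
      U p.1 p.2 r * Real.sqrt (lam p.1 r) * Real.sqrt (lam q.1 s) * U q.1 q.2 s
    else 0

open Polynomial

namespace Matrix

variable {R : Type*}

variable (R) in
/-- `Π_{mn}`, the upper-left `m × n` block of the identity. -/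
def idBlock [Zero R] [One R] (m n : ℕ) : Matrix (Fin m) (Fin n) R :=
  of fun x y => if (x : ℕ) = y then 1 else 0

theorem idBlock_mul_transpose_idBlock [NonAssocSemiring R] {m₁ m₂ n : ℕ} (h : m₁ ≤ n) :
    idBlock R m₁ n * (idBlock R m₂ n)ᵀ = idBlock R m₁ m₂ := by
  ext x y
  rw [mul_apply, Finset.sum_eq_single ⟨x, x.2.trans_le h⟩] <;>
    simp +contextual [idBlock, eq_comm, Fin.ext_iff]

theorem transpose_idBlock_mul_diagonal_mul_idBlock [NonAssocSemiring R] (m n : ℕ)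
    (v : Fin m → R) :
    (idBlock R m n)ᵀ * diagonal v * idBlock R m n =
      diagonal fun a : Fin n => if h : (a : ℕ) < m then v ⟨a, h⟩ else 0 := by
  ext a b
  rw [mul_apply]
  simp only [mul_diagonal, idBlock, transpose_apply, of_apply, diagonal_apply]
  by_cases h : (a : ℕ) < m
  · rw [Finset.sum_eq_single ⟨a, h⟩] <;> simp +contextual [Fin.ext_iff, eq_comm, h]
  · refine (Finset.sum_eq_zero fun x _ => ?_).trans (by simp [h])
    have hx : (x : ℕ) ≠ a := fun hx => h (hx ▸ x.2)
    simp [hx]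

def sigmaRows {ι : Type*} {m : ι → Type*} {n : Type*} (B : ∀ i, Matrix (m i) n R) :
    Matrix (Σ i, m i) n R :=
  of fun p => B p.1 p.2

theorem sigmaRows_mul_transpose_apply [Mul R] [AddCommMonoid R] {ι : Type*} {m : ι → Type*}
    {n : Type*} [Fintype n] (B C : ∀ i, Matrix (m i) n R) (p q : Σ i, m i) :
    (sigmaRows B * (sigmaRows C)ᵀ) p q = (B p.1 * (C q.1)ᵀ) p.2 q.2 :=
  rfl

theorem transpose_sigmaRows_mul_sigmaRows [Mul R] [AddCommMonoid R] {ι : Type*} [Fintype ι]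
    {m : ι → Type*} [∀ i, Fintype (m i)] {n : Type*} (B C : ∀ i, Matrix (m i) n R) :
    (sigmaRows B)ᵀ * sigmaRows C = ∑ i, (B i)ᵀ * C i := by
  ext a b
  simp [sigmaRows, mul_apply, Fintype.sum_sigma, Matrix.sum_apply]

theorem charpoly_mul_comm_of_card_eq [CommRing R] {m n : Type*} [Fintype m] [Fintype n]
    [DecidableEq m] [DecidableEq n] (A : Matrix m n R) (B : Matrix n m R)
    (h : Fintype.card m = Fintype.card n) : (A * B).charpoly = (B * A).charpoly := by
  simpa [h] using charpoly_mul_comm_of_le A B h.ge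

end Matrix

theorem Polynomial.roots_finset_prod_X_sub_C {R ι : Type*} [CommRing R] [IsDomain R]
    (s : Finset ι) (f : ι → R) : (∏ i ∈ s, (X - C (f i))).roots = s.val.map f := by
  rw [Finset.prod_eq_multiset_prod, ← roots_multiset_prod_X_sub_C (s.val.map f), Multiset.map_map]
  rfl

section Rmax

variable {k : ℕ} (d : Fin k → ℕ) (U : ∀ i, Matrix (Fin (d i)) (Fin (d i)) ℝ)
  (lam : ∀ i, Fin (d i) → ℝ)

noncomputable def rmaxFactor : Matrix (Σ i, Fin (d i)) (Fin (∑ i, d i)) ℝ :=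
  sigmaRows fun i => U i * diagonal (fun r => √(lam i r)) * idBlock ℝ (d i) (∑ i, d i)

noncomputable def eigenSum (j : ℕ) : ℝ :=
  ∑ i, if h : j < d i then lam i ⟨j, h⟩ else 0

theorem Rmax_eq_rmaxFactor_mul_transpose :
    Rmax d U lam = rmaxFactor d U lam * (rmaxFactor d U lam)ᵀ := by
  ext ⟨i, x⟩ ⟨j, y⟩
  have hblock : (U i * diagonal (fun r => √(lam i r)) * idBlock ℝ (d i) (∑ i, d i)) *
      (U j * diagonal (fun r => √(lam j r)) * idBlock ℝ (d j) (∑ i, d i))ᵀ =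
      U i * (diagonal (fun r => √(lam i r)) * idBlock ℝ (d i) (d j) *
        diagonal (fun s => √(lam j s))) * (U j)ᵀ := by
    rw [← idBlock_mul_transpose_idBlock (m₂ := d j)
      (Finset.single_le_sum (f := d) (fun _ _ => Nat.zero_le _) (Finset.mem_univ i))]
    simp only [transpose_mul, diagonal_transpose, Matrix.mul_assoc]
  unfold rmaxFactor
  rw [sigmaRows_mul_transpose_apply, hblock, mul_apply]
  simp only [mul_apply (M := U i), mul_diagonal, diagonal_mul, idBlock, of_apply, transpose_apply,
    Finset.sum_mul, Rmax]
  rw [Finset.sum_comm]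
  refine Finset.sum_congr rfl fun r _ => Finset.sum_congr rfl fun s _ => ?_
  split_ifs <;> ring

variable {d U lam}

theorem transpose_rmaxFactor_mul_rmaxFactor (hU : ∀ i, U i * (U i)ᵀ = 1)
    (hpos : ∀ i j, 0 ≤ lam i j) :
    (rmaxFactor d U lam)ᵀ * rmaxFactor d U lam =
      diagonal fun a : Fin (∑ i, d i) => eigenSum d lam a := by
  have hblock : ∀ i, (U i * diagonal (fun r => √(lam i r)) * idBlock ℝ (d i) (∑ i, d i))ᵀ *
      (U i * diagonal (fun r => √(lam i r)) * idBlock ℝ (d i) (∑ i, d i)) =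
      (idBlock ℝ (d i) (∑ i, d i))ᵀ * diagonal (lam i) * idBlock ℝ (d i) (∑ i, d i) := by
    intro i
    have hsq : diagonal (fun r => √(lam i r)) * diagonal (fun r => √(lam i r)) =
        diagonal (lam i) := by
      rw [diagonal_mul_diagonal]
      exact congrArg diagonal (funext fun r => Real.mul_self_sqrt (hpos i r))
    calc _ = (idBlock ℝ (d i) (∑ i, d i))ᵀ * (diagonal (fun r => √(lam i r)) *
          ((U i)ᵀ * U i) * diagonal (fun r => √(lam i r))) * idBlock ℝ (d i) (∑ i, d i) := by
          simp only [transpose_mul, diagonal_transpose, Matrix.mul_assoc]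
      _ = _ := by rw [mul_eq_one_comm.mp (hU i), Matrix.mul_one, hsq]
  unfold rmaxFactor
  simp only [transpose_sigmaRows_mul_sigmaRows, hblock, transpose_idBlock_mul_diagonal_mul_idBlock]
  ext a b
  rw [Matrix.sum_apply, diagonal_apply]
  split_ifs with hab
  · simp [hab, eigenSum]
  · simp [diagonal_apply_ne _ hab]

theorem charpoly_Rmax (hU : ∀ i, U i * (U i)ᵀ = 1) (hpos : ∀ i j, 0 ≤ lam i j) :
    (Rmax d U lam).charpoly = ∏ j ∈ Finset.range (∑ i, d i), (X - C (eigenSum d lam j)) := by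
  rw [Rmax_eq_rmaxFactor_mul_transpose, charpoly_mul_comm_of_card_eq _ _ (by simp),
    transpose_rmaxFactor_mul_rmaxFactor hU hpos, charpoly_diagonal,
    Fin.prod_univ_eq_prod_range (fun j => X - C (eigenSum d lam j))]

end Rmax

theorem eigenvalues_Rmax_general {k : ℕ} (d : Fin k → ℕ)
    (U : ∀ i, Matrix (Fin (d i)) (Fin (d i)) ℝ)
    (hU : ∀ i, U i * (U i)ᵀ = 1)
    (lam : ∀ i, Fin (d i) → ℝ) (hpos : ∀ i j, 0 ≤ lam i j)
    (hherm : (Rmax d U lam).IsHermitian) :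
    Finset.univ.val.map hherm.eigenvalues =
      (Finset.range (∑ i, d i)).val.map
        (fun j => ∑ i, if h : j < d i then lam i ⟨j, h⟩ else 0) := by
  have h := hherm.roots_charpoly_eq_eigenvalues
  rw [charpoly_Rmax hU hpos, roots_finset_prod_X_sub_C] at h
  exact h.symm

/-- Eigenvalues of `R_m` : if `d₁ ≤ ⋯ ≤ d_k`, `R_ii = U_ii Λ_ii U_iiᵀ` with decreasing
eigenvalues `λ_{1,ii} ≥ ⋯ ≥ λ_{d_i,ii} ≥ 0` (set `λ_{j,ii} = 0` for `j > d_i`), then the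
multiset of eigenvalues of `R_m` is `{λ_{j,11} + ⋯ + λ_{j,kk} : j = 0,…,q-1}` where
`q = d₁ + ⋯ + d_k`. -/
theorem eigenvalues_Rmax {k : ℕ} (d : Fin k → ℕ) (hd : Monotone d)
    (U : ∀ i, Matrix (Fin (d i)) (Fin (d i)) ℝ)
    (hU : ∀ i, U i * (U i)ᵀ = 1)
    (lam : ∀ i, Fin (d i) → ℝ) (hpos : ∀ i j, 0 ≤ lam i j)
    (hdec : ∀ i, ∀ r s : Fin (d i), r ≤ s → lam i s ≤ lam i r)
    (hherm : (Rmax d U lam).IsHermitian) :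
    Finset.univ.val.map hherm.eigenvalues =
      (Finset.range (∑ i, d i)).val.map
        (fun j => ∑ i, if h : j < d i then lam i ⟨j, h⟩ else 0) :=
  eigenvalues_Rmax_general d U hU lam hpos hherm
end

section
/- Let Λ₁,…,Λ_k be diagonal matrices with Λ_i = diag(λ_{1,i},…,λ_{d_i,i}), d₁ ≤ ⋯ ≤ d_k, entries decreasing in j, and set λ_{j,i} = 0 for j > d_i. Consider the block matrix Λ_m with diagonal blocks Λ_i and off-diagonal blocks Λ_i^{1/2} Π_ij Λ_j^{1/2}. Then for every i ∈ {1,…,k−1} and j ∈ {1,…,d_i}, the vector with block components (0,…,0, λ_{j,i+1}^{1/2} e_{j,d_i}, −λ_{j,i}^{1/2} e_{j,d_{i+1}}, 0,…,0) (nonzero only in blocks i and i+1) lies in the kernel of Λ_m; in particular Λ_m has rank at most d_k. -/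
open Matrix

/-- The block matrix `Λ_m` with diagonal blocks `Λ_i = diag(λ_{1,i},…,λ_{d_i,i})` and
off-diagonal blocks `Λ_i^{1/2} Π_ij Λ_j^{1/2}` (`Π_ij` the upper-left block of the
identity).  Entrywise, `(Λ_m)_{(i,a),(j,b)} = √(λ_{a,i}) √(λ_{b,j})` if `a` and `b`
have the same index value, and `0` otherwise. -/
noncomputable def LamM {k : ℕ} (d : Fin k → ℕ) (lam : ∀ i, Fin (d i) → ℝ) :
    Matrix (Σ i, Fin (d i)) (Σ i, Fin (d i)) ℝ :=
  fun p q =>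
    if (p.2 : ℕ) = (q.2 : ℕ) then Real.sqrt (lam p.1 p.2) * Real.sqrt (lam q.1 q.2)
    else 0

/-- For `d₁ ≤ ⋯ ≤ d_k` and nonnegative decreasing `λ_{·,i}` (zero beyond `d_i`), for
every `i ∈ {1,…,k−1}` and `j ∈ {1,…,d_i}`, the vector which is
`√(λ_{j,i+1}) e_{j,d_i}` in block `i`, `−√(λ_{j,i}) e_{j,d_{i+1}}` in block `i+1` and
`0` elsewhere, lies in the kernel of `Λ_m`; in particular `Λ_m` has rank at most `d_k`. -/
theorem LamM_kernel_and_rank {k : ℕ} (d : Fin k → ℕ) (hd : Monotone d)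
    (lam : ∀ i, Fin (d i) → ℝ) (hpos : ∀ i j, 0 ≤ lam i j)
    (hdec : ∀ i, ∀ r s : Fin (d i), r ≤ s → lam i s ≤ lam i r) :
    (∀ (i : Fin k) (hik : (i : ℕ) + 1 < k) (j : Fin (d i)),
        (LamM d lam).mulVec
          (fun p =>
            if p.1 = i ∧ (p.2 : ℕ) = (j : ℕ) then
              Real.sqrt (lam ⟨(i : ℕ) + 1, hik⟩
                (Fin.castLE (hd (show i ≤ (⟨(i : ℕ) + 1, hik⟩ : Fin k) by
                  simp [Fin.le_def])) j))
            else if p.1 = (⟨(i : ℕ) + 1, hik⟩ : Fin k) ∧ (p.2 : ℕ) = (j : ℕ) then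
              -Real.sqrt (lam i j)
            else 0) = 0) ∧
      ∀ hk : 0 < k, (LamM d lam).rank ≤ d ⟨k - 1, by omega⟩ := by
  constructor
  intro i hik j
  set i' : Fin k := ⟨(i : ℕ) + 1, hik⟩ with hi'
  have hii' : i ≤ i' := by simp [Fin.le_def, hi']
  set j' : Fin (d i') := Fin.castLE (hd hii') j with hj'
  funext p
  simp only [mulVec, dotProduct, Pi.zero_apply]
  have key : ∀ q : Σ m, Fin (d m),
      LamM d lam p q *
        (if q.1 = i ∧ (q.2 : ℕ) = (j : ℕ) then Real.sqrt (lam i' j')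
          else if q.1 = i' ∧ (q.2 : ℕ) = (j : ℕ) then -Real.sqrt (lam i j) else 0)
      = (if q = ⟨i, j⟩ then
            LamM d lam p ⟨i, j⟩ * Real.sqrt (lam i' j') else 0)
        + (if q = ⟨i', j'⟩ then
            -(LamM d lam p ⟨i', j'⟩ * Real.sqrt (lam i j)) else 0) := by
    intro q
    by_cases h1 : q.1 = i ∧ (q.2 : ℕ) = (j : ℕ)
    · have hq : q = ⟨i, j⟩ := by
        obtain ⟨qi, qj⟩ := q
        obtain ⟨h1a, h1b⟩ := h1
        subst h1a
        simp only at h1b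
        exact congrArg (fun x => (Sigma.mk _ x : Σ m, Fin (d m))) (Fin.ext h1b)
      subst hq
      have hne : (⟨i, j⟩ : Σ m, Fin (d m)) ≠ ⟨i', j'⟩ := by
        intro h
        have := congrArg (fun x : Σ m, Fin (d m) => (x.1 : ℕ)) h
        simp [hi'] at this
      simp [h1, hne]
    · by_cases h2 : q.1 = i' ∧ (q.2 : ℕ) = (j : ℕ)
      · have hq : q = ⟨i', j'⟩ := by
          obtain ⟨qi, qj⟩ := q
          obtain ⟨h2a, h2b⟩ := h2
          subst h2a
          exact Sigma.ext rfl (by simp [Fin.ext_iff, hj'] at h2b ⊢; exact h2b)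
        subst hq
        have hne : (⟨i', j'⟩ : Σ m, Fin (d m)) ≠ ⟨i, j⟩ := by
          intro h
          have := congrArg (fun x : Σ m, Fin (d m) => (x.1 : ℕ)) h
          simp [hi'] at this
        have hjj : ((j' : Fin (d i')) : ℕ) = (j : ℕ) := by simp [hj']
        have hne0 : i' ≠ i := by
          intro h
          have := congrArg Fin.val h
          simp [hi'] at this
        simp [h1, h2, hne, hjj, hne0]
      · have hq1 : q ≠ ⟨i, j⟩ := by rintro rfl; exact h1 ⟨rfl, rfl⟩
        have hq2 : q ≠ ⟨i', j'⟩ := by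
          rintro rfl; exact h2 ⟨rfl, by simp [hj']⟩
        simp [h1, h2, hq1, hq2]
  rw [Finset.sum_congr rfl (fun q _ => key q), Finset.sum_add_distrib,
    Finset.sum_ite_eq' Finset.univ, Finset.sum_ite_eq' Finset.univ]
  have : (LamM d lam p ⟨i, j⟩) * Real.sqrt (lam i' j')
      = (LamM d lam p ⟨i', j'⟩) * Real.sqrt (lam i j) := by
    simp only [LamM]
    have : ((j' : ℕ) : ℕ) = (j : ℕ) := by simp [hj']
    by_cases h : (p.2 : ℕ) = (j : ℕ) <;> simp [h, this] <;> ring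
  simp [this]

  intro hk
  set N : Fin k := ⟨k - 1, by omega⟩ with hN
  have hle : ∀ p : Σ m, Fin (d m), (p.2 : ℕ) < d N := fun p =>
    lt_of_lt_of_le p.2.isLt (hd (by simp [Fin.le_def, hN]; omega))
  have hfac : LamM d lam =
      (Matrix.of (fun (p : Σ m, Fin (d m)) (r : Fin (d N)) =>
        if (p.2 : ℕ) = (r : ℕ) then Real.sqrt (lam p.1 p.2) else 0)) *
      (Matrix.of (fun (r : Fin (d N)) (q : Σ m, Fin (d m)) =>
        if (q.2 : ℕ) = (r : ℕ) then Real.sqrt (lam q.1 q.2) else 0)) := by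
    ext p q
    rw [Matrix.mul_apply]
    by_cases h : (p.2 : ℕ) = (q.2 : ℕ)
    · rw [Finset.sum_eq_single (⟨(p.2 : ℕ), hle p⟩ : Fin (d N))]
      · simp [LamM, h]
      · intro r _ hr
        have hne : ¬ (p.2 : ℕ) = (r : ℕ) := fun hc => hr (Fin.ext hc.symm)
        simp [hne]
      · simp
    · rw [Finset.sum_eq_zero, LamM]
      · simp [h]
      · intro r _
        by_cases h1 : (p.2 : ℕ) = (r : ℕ) <;> by_cases h2 : (q.2 : ℕ) = (r : ℕ) <;>
          simp [h1, h2] <;> omega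
  rw [hfac]
  exact (Matrix.rank_mul_le_left _ _).trans
    ((Matrix.rank_le_card_width _).trans (by simp))
end
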